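/- For t, α ≥ 0 and μ > 0, with W_{α,k}(t) = 2 g'_{α,k}(t) t + g_{α,k}(t) and g_{α,k}(t) = k(μ²+t)^α/(k+(μ²+t)^α), the sequence (W_{α,k}(t))_{k≥1} is nondecreasing in k, and its limit as k → ∞ equals (μ² + t)^{α−1}(2αt + μ² + t); moreover (μ² + t)^α ≤ lim_{k→∞} W_{α,k}(t) ≤ 3(α + 1)(μ² + t)^α. -/

import Mathlib

open Real Filter

/-- The smooth truncation `g_{α,k}(t) = k(μ²+t)^α / (k+(μ²+t)^α)`, indexed by `k ∈ ℕ`. -/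
noncomputable def gTrunc (μ α : ℝ) (k : ℕ) : ℝ → ℝ :=
  fun t => (k : ℝ) * (μ ^ 2 + t) ^ α / ((k : ℝ) + (μ ^ 2 + t) ^ α)

/-- `W_{α,k}(t) = 2 g'_{α,k}(t) t + g_{α,k}(t)`. -/
noncomputable def WTrunc (μ α : ℝ) (k : ℕ) : ℝ → ℝ :=
  fun t => 2 * deriv (gTrunc μ α k) t * t + gTrunc μ α k t

/-! With `s = μ² + t`, `c = s^α` and `r_k = k / (k + c)`, the quotient rule gives
`g'_{α,k}(t) = α s^{α-1} r_k²` and `g_{α,k}(t) = c r_k`, so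
`W_{α,k}(t) = 2αt s^{α-1} r_k² + c r_k`. Since `r_k` increases to `1`, the sequence increases to
`2αt s^{α-1} + s^α = s^{α-1}(2αt + s)`, and `t ≤ s` bounds this by `(2α + 1) s^α`. -/

lemma monotone_natCast_div_add_const {c : ℝ} (hc : 0 < c) :
    Monotone fun k : ℕ => (k : ℝ) / (k + c) := by
  refine monotone_nat_of_le_succ fun k => ?_
  rw [div_le_div_iff₀ (by positivity) (by positivity)]
  push_cast
  nlinarith

section Truncation

variable {μ α t : ℝ}

lemma hasDerivAt_gTrunc (k : ℕ) (hs : 0 < μ ^ 2 + t) :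
    HasDerivAt (gTrunc μ α k)
      (α * (μ ^ 2 + t) ^ (α - 1) * ((k : ℝ) / (k + (μ ^ 2 + t) ^ α)) ^ 2) t := by
  have hpow : HasDerivAt (fun x => (μ ^ 2 + x) ^ α) (α * (μ ^ 2 + t) ^ (α - 1)) t := by
    simpa using ((hasDerivAt_id t).const_add (μ ^ 2)).rpow_const (p := α) (Or.inl hs.ne')
  have hden : (k : ℝ) + (μ ^ 2 + t) ^ α ≠ 0 := by positivity
  refine ((hpow.const_mul (k : ℝ)).div (hpow.const_add (k : ℝ)) hden).congr_deriv ?_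
  field_simp
  ring

lemma WTrunc_eq (k : ℕ) (hs : 0 < μ ^ 2 + t) :
    WTrunc μ α k t =
      2 * α * t * (μ ^ 2 + t) ^ (α - 1) * ((k : ℝ) / (k + (μ ^ 2 + t) ^ α)) ^ 2 +
        (μ ^ 2 + t) ^ α * ((k : ℝ) / (k + (μ ^ 2 + t) ^ α)) := by
  rw [WTrunc, (hasDerivAt_gTrunc k hs).deriv, gTrunc]
  ring

lemma monotone_WTrunc (hα : 0 ≤ α) (ht : 0 ≤ t) (hs : 0 < μ ^ 2 + t) :
    Monotone fun k : ℕ => WTrunc μ α k t := by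
  intro m n hmn
  have hr := monotone_natCast_div_add_const (rpow_pos_of_pos hs α) hmn
  have hr₀ : 0 ≤ (m : ℝ) / (m + (μ ^ 2 + t) ^ α) := by positivity
  simp only [WTrunc_eq _ hs] at hr ⊢
  gcongr

lemma tendsto_WTrunc (hs : 0 < μ ^ 2 + t) :
    Tendsto (fun k : ℕ => WTrunc μ α k t) atTop
      (nhds (2 * α * t * (μ ^ 2 + t) ^ (α - 1) + (μ ^ 2 + t) ^ α)) := by
  have hr := tendsto_natCast_div_add_atTop (𝕜 := ℝ) ((μ ^ 2 + t) ^ α)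
  simpa only [WTrunc_eq _ hs, one_pow, mul_one] using
    (tendsto_const_nhds.mul (hr.pow 2)).add (tendsto_const_nhds.mul hr)

end Truncation

/-- For `t, α ≥ 0` and `μ > 0`, the sequence `k ↦ W_{α,k}(t)` is nondecreasing in
`k ≥ 1`, converges to `(μ²+t)^{α-1}(2αt + μ² + t)` as `k → ∞`, and this limit
satisfies `(μ²+t)^α ≤ lim ≤ 3(α+1)(μ²+t)^α`. -/
theorem stmt9 (μ α t : ℝ) (hμ : 0 < μ) (hα : 0 ≤ α) (ht : 0 ≤ t) :
    (∀ k : ℕ, 1 ≤ k → WTrunc μ α k t ≤ WTrunc μ α (k + 1) t) ∧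
      Tendsto (fun k : ℕ => WTrunc μ α k t) atTop
        (nhds ((μ ^ 2 + t) ^ (α - 1) * (2 * α * t + μ ^ 2 + t))) ∧
      (μ ^ 2 + t) ^ α ≤ (μ ^ 2 + t) ^ (α - 1) * (2 * α * t + μ ^ 2 + t) ∧
      (μ ^ 2 + t) ^ (α - 1) * (2 * α * t + μ ^ 2 + t) ≤ 3 * (α + 1) * (μ ^ 2 + t) ^ α := by
  set s := μ ^ 2 + t
  have hs : 0 < s := by positivity
  have hts : t ≤ s := by nlinarith
  have hlim : s ^ (α - 1) * (2 * α * t + μ ^ 2 + t) = 2 * α * t * s ^ (α - 1) + s ^ α := by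
    rw [rpow_sub_one hs.ne']
    field_simp
    ring
  have hpow : 0 ≤ s ^ (α - 1) := (rpow_pos_of_pos hs _).le
  rw [hlim]
  refine ⟨fun k _ => monotone_WTrunc hα ht hs k.le_succ, tendsto_WTrunc hs,
    le_add_of_nonneg_left (by positivity), ?_⟩
  calc 2 * α * t * s ^ (α - 1) + s ^ α ≤ 2 * α * s * s ^ (α - 1) + s ^ α := by gcongr
    _ = (2 * α + 1) * s ^ α := by rw [rpow_sub_one hs.ne']; field_simp
    _ ≤ 3 * (α + 1) * s ^ α := by gcongr; linarith
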